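/- Let V be a finite set of points in ℤ² with |V| = n ≥ 3. If V has a Hamiltonian cycle in the grid graph (edges between points at Euclidean distance exactly 1), then the shortest closed tour visiting all points of V has Euclidean length exactly n. If V has no such Hamiltonian cycle, then every closed tour visiting all points of V has Euclidean length at least n + √2 − 1. -/

import Mathlib

/-!
By the triangle inequality, skipping a stop never lengthens a closed tour, so any tour visiting
`V` can be shortcut to one visiting each point of `V` exactly once, i.e. to a cyclic ordering of
`V`. Its `n` steps join distinct lattice points, so each has length `1` or at least `√2`; hence
the tour has length at least `n`, with equality exactly when all steps are grid edges, i.e. when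
the ordering is a Hamiltonian cycle of the grid graph. Otherwise one step has length at least
`√2`, giving `n - 1 + √2`.
-/

/-- Euclidean distance between two lattice points. -/
noncomputable def latticeDist (a b : ℤ × ℤ) : ℝ :=
  Real.sqrt (((a.1 - b.1 : ℤ) : ℝ) ^ 2 + ((a.2 - b.2 : ℤ) : ℝ) ^ 2)

/-- The Euclidean length of the closed tour `t 0, t 1, …, t m, t 0`. -/
noncomputable def tourLength {m : ℕ} (t : Fin (m + 1) → ℤ × ℤ) : ℝ :=
  ∑ i : Fin (m + 1), latticeDist (t i) (t (i + 1))

/-- The tour visits every point of `V` (at least once). -/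
def VisitsAll {m : ℕ} (t : Fin (m + 1) → ℤ × ℤ) (V : Finset (ℤ × ℤ)) : Prop :=
  ∀ v ∈ V, ∃ i, t i = v

/-- `V` has a Hamiltonian cycle in the grid graph, whose edges join points of `V`
at Euclidean distance exactly 1. -/
def HasGridHamCycle (V : Finset (ℤ × ℤ)) : Prop :=
  ∃ c : Fin V.card → ℤ × ℤ, (∀ i, c i ∈ V) ∧ Function.Injective c ∧
    ∀ i, latticeDist (c i) (c (finRotate _ i)) = 1

open Finset Function

theorem Fin.add_one_ne_self {n : ℕ} [NeZero n] (hn : 2 ≤ n) (i : Fin n) : i + 1 ≠ i := by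
  intro h
  have := Fin.one_eq_zero_iff.mp (add_eq_left.mp h)
  omega

section CycleLength

variable {X : Type*} (d : X → X → ℝ)

noncomputable def cycleLength {n : ℕ} [NeZero n] (t : Fin n → X) : ℝ :=
  ∑ i, d (t i) (t (i + 1))

theorem cycleLength_comp_add_right {n : ℕ} [NeZero n] (t : Fin n → X) (r : Fin n) :
    cycleLength d (fun i => t (i + r)) = cycleLength d t :=
  Fintype.sum_equiv (Equiv.addRight r) _ _ fun i => by simp [add_right_comm]

theorem cycleLength_comp_cast {m n : ℕ} [NeZero m] [NeZero n] (h : m = n) (t : Fin n → X) :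
    cycleLength d (t ∘ Fin.cast h) = cycleLength d t := by
  subst h; rfl

variable {d}

theorem cycleLength_comp_castSucc_le (hd : ∀ x y z, d x z ≤ d x y + d y z) {m : ℕ}
    (t : Fin (m + 2) → X) :
    cycleLength d (t ∘ Fin.castSucc) ≤ cycleLength d t := by
  simp only [cycleLength, Fin.sum_univ_castSucc (n := m), Fin.sum_univ_castSucc (n := m + 1),
    comp_apply, Fin.coeSucc_eq_succ, Fin.succ_castSucc, Fin.last_add_one, Fin.castSucc_zero,
    Fin.succ_last]
  linarith [hd (t (Fin.last m).castSucc) (t (Fin.last (m + 1))) (t 0)]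

/-- Rotate so that stop `k` comes last, then drop it. -/
theorem exists_cycleLength_le_omit (hd : ∀ x y z, d x z ≤ d x y + d y z) {m : ℕ}
    (t : Fin (m + 2) → X) (k : Fin (m + 2)) :
    ∃ s : Fin (m + 1) → X, cycleLength d s ≤ cycleLength d t ∧ ∀ j ≠ k, ∃ i, s i = t j := by
  refine ⟨fun i => t (i.castSucc + (k + 1)), ?_, fun j hj => ?_⟩
  · calc _ ≤ cycleLength d (fun i => t (i + (k + 1))) :=
          cycleLength_comp_castSucc_le hd fun i => t (i + (k + 1))
      _ = cycleLength d t := cycleLength_comp_add_right d t _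
  · obtain ⟨i, hi⟩ := Fin.exists_castSucc_eq.mpr fun h : j - (k + 1) = Fin.last (m + 1) => hj <| by
      rw [sub_eq_iff_eq_add.mp h, ← add_assoc, add_comm _ k, add_assoc, Fin.last_add_one, add_zero]
    exact ⟨i, by simp [hi]⟩

theorem exists_omittable_of_not_injective_mem {V : Finset X} {m : ℕ} {t : Fin (m + 1) → X}
    (ht : ∀ v ∈ V, ∃ i, t i = v) (h : ¬(Injective t ∧ ∀ i, t i ∈ V)) :
    ∃ k, ∀ v ∈ V, ∃ j ≠ k, t j = v := by
  rw [not_and_or] at h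
  rcases h with hinj | hV
  · obtain ⟨j, k, hjk, hne⟩ : ∃ j k, t j = t k ∧ j ≠ k := by
      simpa [Injective] using hinj
    refine ⟨k, fun v hv => ?_⟩
    obtain ⟨i, rfl⟩ := ht v hv
    by_cases hik : i = k
    · exact ⟨j, hne, hik ▸ hjk⟩
    · exact ⟨i, hik, rfl⟩
  · obtain ⟨k, hk⟩ := not_forall.mp hV
    refine ⟨k, fun v hv => ?_⟩
    obtain ⟨i, rfl⟩ := ht v hv
    exact ⟨i, fun hik => hk (hik ▸ hv), rfl⟩

theorem exists_shortcut_cycle (hd : ∀ x y z, d x z ≤ d x y + d y z)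
    {V : Finset X} (hV : V.Nonempty) {m : ℕ} (t : Fin (m + 1) → X)
    (ht : ∀ v ∈ V, ∃ i, t i = v) :
    ∃ (k : ℕ) (w : Fin (k + 1) → X), Injective w ∧ (∀ i, w i ∈ V) ∧
      (∀ v ∈ V, ∃ i, w i = v) ∧ cycleLength d w ≤ cycleLength d t := by
  induction m with
  | zero =>
    obtain ⟨v, hv⟩ := hV
    obtain ⟨i, rfl⟩ := ht v hv
    exact ⟨0, t, fun i j _ => Subsingleton.elim (α := Fin 1) i j,
      fun j => Subsingleton.elim (α := Fin 1) i j ▸ hv, ht, le_rfl⟩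
  | succ m ih =>
    by_cases hgood : Injective t ∧ ∀ i, t i ∈ V
    · exact ⟨m + 1, t, hgood.1, hgood.2, ht, le_rfl⟩
    obtain ⟨k, hk⟩ := exists_omittable_of_not_injective_mem ht hgood
    obtain ⟨s, hst, hs⟩ := exists_cycleLength_le_omit hd t k
    obtain ⟨l, w, hw, hwV, hwt, hws⟩ := ih s fun v hv => by
      obtain ⟨j, hjk, rfl⟩ := hk v hv
      exact hs j hjk
    exact ⟨l, w, hw, hwV, hwt, hws.trans hst⟩

theorem exists_injective_cycleLength_le (hd : ∀ x y z, d x z ≤ d x y + d y z)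
    {V : Finset X} [NeZero #V] {m : ℕ} (t : Fin (m + 1) → X) (ht : ∀ v ∈ V, ∃ i, t i = v) :
    ∃ w : Fin #V → X, (∀ i, w i ∈ V) ∧ Injective w ∧ cycleLength d w ≤ cycleLength d t := by
  obtain ⟨k, w, hw, hwV, hwt, hle⟩ :=
    exists_shortcut_cycle hd (card_ne_zero.mp (NeZero.ne #V)) t ht
  have hcard : #V = k + 1 := by
    classical
    have : univ.image w = V := by
      ext v; simp only [mem_image, mem_univ, true_and]; exact ⟨fun ⟨i, hi⟩ => hi ▸ hwV i, hwt v⟩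
    rw [← this, card_image_of_injective _ hw, card_univ, Fintype.card_fin]
  exact ⟨w ∘ Fin.cast hcard, fun i => hwV _, hw.comp (Fin.cast_injective hcard),
    (cycleLength_comp_cast d hcard w).trans_le hle⟩

theorem sub_one_add_le_cycleLength {n : ℕ} [NeZero n] {t : Fin n → X}
    (h : ∀ i, 1 ≤ d (t i) (t (i + 1))) (j : Fin n) :
    (n : ℝ) - 1 + d (t j) (t (j + 1)) ≤ cycleLength d t := by
  have := single_le_sum (f := fun i => d (t i) (t (i + 1)) - 1) (fun i _ => sub_nonneg.mpr (h i))
    (mem_univ j)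
  rw [sum_sub_distrib] at this
  simp only [sum_const, card_univ, Fintype.card_fin, nsmul_eq_mul, mul_one] at this
  rw [cycleLength]; linarith

end CycleLength

theorem Finset.exists_apply_eq_of_injective {α : Type*} {V : Finset α} {c : Fin #V → α}
    (hcV : ∀ i, c i ∈ V) (hc : Injective c) : ∀ v ∈ V, ∃ i, c i = v := by
  intro v hv
  obtain ⟨i, -, hi⟩ := surjOn_of_injOn_of_card_le (s := univ) c (fun i _ => hcV i)
    hc.injOn (by simp) hv
  exact ⟨i, hi⟩

theorem tourLength_eq_cycleLength {m : ℕ} (t : Fin (m + 1) → ℤ × ℤ) :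
    tourLength t = cycleLength latticeDist t :=
  rfl

theorem latticeDist_eq_dist (a b : ℤ × ℤ) :
    latticeDist a b = dist (⟨a.1, a.2⟩ : ℂ) ⟨b.1, b.2⟩ := by
  simp only [latticeDist, Complex.dist_eq, Complex.norm_def, Complex.normSq_apply,
    Complex.sub_re, Complex.sub_im]
  push_cast
  ring_nf

theorem latticeDist_triangle (a b c : ℤ × ℤ) :
    latticeDist a c ≤ latticeDist a b + latticeDist b c := by
  simp only [latticeDist_eq_dist, dist_triangle]

theorem latticeDist_eq_sqrt (a b : ℤ × ℤ) :
    latticeDist a b = √(((a.1 - b.1) ^ 2 + (a.2 - b.2) ^ 2 : ℤ) : ℝ) := by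
  rw [latticeDist]; push_cast; rfl

theorem one_le_sq_sub_add_sq_sub {a b : ℤ × ℤ} (h : a ≠ b) :
    1 ≤ (a.1 - b.1) ^ 2 + (a.2 - b.2) ^ 2 := by
  rcases ne_or_eq a.1 b.1 with h1 | h1
  · nlinarith [sq_pos_of_ne_zero (sub_ne_zero.mpr h1), sq_nonneg (a.2 - b.2)]
  · have h2 : a.2 ≠ b.2 := fun h2 => h (Prod.ext h1 h2)
    nlinarith [sq_pos_of_ne_zero (sub_ne_zero.mpr h2), sq_nonneg (a.1 - b.1)]

theorem latticeDist_eq_one_or_sqrt_two_le {a b : ℤ × ℤ} (h : a ≠ b) :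
    latticeDist a b = 1 ∨ √2 ≤ latticeDist a b := by
  rw [latticeDist_eq_sqrt]
  rcases (one_le_sq_sub_add_sq_sub h).eq_or_lt with h1 | h2
  · left; rw [← h1]; simp
  · right; exact Real.sqrt_le_sqrt (by exact_mod_cast h2)

theorem one_le_latticeDist {a b : ℤ × ℤ} (h : a ≠ b) : 1 ≤ latticeDist a b :=
  (latticeDist_eq_one_or_sqrt_two_le h).elim ge_of_eq (Real.one_lt_sqrt_two.le.trans)

theorem hasGridHamCycle_iff {V : Finset (ℤ × ℤ)} [NeZero #V] :
    HasGridHamCycle V ↔ ∃ c : Fin #V → ℤ × ℤ,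
      (∀ i, c i ∈ V) ∧ Injective c ∧ ∀ i, latticeDist (c i) (c (i + 1)) = 1 := by
  simp only [HasGridHamCycle, finRotate_apply]

theorem grid_tsp_gap (V : Finset (ℤ × ℤ)) (n : ℕ) (hcard : V.card = n) (hn : 3 ≤ n) :
    (HasGridHamCycle V →
      (∃ (m : ℕ) (t : Fin (m + 1) → ℤ × ℤ), VisitsAll t V ∧ tourLength t = n) ∧
      (∀ (m : ℕ) (t : Fin (m + 1) → ℤ × ℤ), VisitsAll t V → (n : ℝ) ≤ tourLength t)) ∧
    (¬ HasGridHamCycle V →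
      ∀ (m : ℕ) (t : Fin (m + 1) → ℤ × ℤ), VisitsAll t V →
        (n : ℝ) + Real.sqrt 2 - 1 ≤ tourLength t) := by
  subst hcard
  have : NeZero #V := ⟨by omega⟩
  have hne : ∀ w : Fin #V → ℤ × ℤ, Injective w → ∀ i, w i ≠ w (i + 1) :=
    fun w hw i => hw.ne (Fin.add_one_ne_self (by omega) i).symm
  have hstep : ∀ w : Fin #V → ℤ × ℤ, Injective w → ∀ i, 1 ≤ latticeDist (w i) (w (i + 1)) :=
    fun w hw i => one_le_latticeDist (hne w hw i)
  refine ⟨fun hham => ⟨?_, fun m t ht => ?_⟩, fun hham m t ht => ?_⟩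
  · obtain ⟨c, hcV, hc, hc1⟩ := hasGridHamCycle_iff.mp hham
    obtain ⟨m, hm⟩ := Nat.exists_eq_add_one_of_ne_zero (NeZero.ne #V)
    refine ⟨m, c ∘ Fin.cast hm.symm, fun v hv => ?_, ?_⟩
    · obtain ⟨i, rfl⟩ := exists_apply_eq_of_injective hcV hc v hv
      exact ⟨Fin.cast hm i, by simp⟩
    · rw [tourLength_eq_cycleLength, cycleLength_comp_cast, cycleLength]
      simp [hc1]
  · obtain ⟨w, -, hw, hle⟩ := exists_injective_cycleLength_le latticeDist_triangle t ht
    calc (#V : ℝ) ≤ #V - 1 + latticeDist (w 0) (w (0 + 1)) := by linarith [hstep w hw 0]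
      _ ≤ cycleLength latticeDist w := sub_one_add_le_cycleLength (hstep w hw) 0
      _ ≤ tourLength t := tourLength_eq_cycleLength t ▸ hle
  · obtain ⟨w, hwV, hw, hle⟩ := exists_injective_cycleLength_le latticeDist_triangle t ht
    obtain ⟨j, hj⟩ : ∃ j, latticeDist (w j) (w (j + 1)) ≠ 1 := by
      by_contra! h
      exact hham (hasGridHamCycle_iff.mpr ⟨w, hwV, hw, h⟩)
    have hgap := (latticeDist_eq_one_or_sqrt_two_le (hne w hw j)).resolve_left hj
    calc (#V : ℝ) + √2 - 1 ≤ #V - 1 + latticeDist (w j) (w (j + 1)) := by linarith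
      _ ≤ cycleLength latticeDist w := sub_one_add_le_cycleLength (hstep w hw) j
      _ ≤ tourLength t := tourLength_eq_cycleLength t ▸ hle
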